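/- Let x, η ∈ S^{d-1} with 1 + 2^i d(x,η) ≤ K, t ∈ (0,1], and let f satisfy |f(y) − f(x)| ≤ M d(x,y)^t on B(x,δ), f bounded. Let ψ be a function with ∫ ψ = 0 and |ψ(y)| ≤ c_m 2^{i(d-1)/2}/(1 + 2^i d(y,η))^m for all m. Then |∫_{S^{d-1}} ψ(y) f(y) dy| ≤ C 2^{-i(2t+d-1)/2}, with C depending on M, δ, d, t, ‖f‖_∞, K and the constants c_m. -/

import Mathlib

open MeasureTheory Metric

/-- The surface measure on the unit sphere `S^{d-1} ⊂ ℝ^d` (total mass `ω_{d-1}`). -/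
noncomputable def sphereMeasure (d : ℕ) :
    Measure (sphere (0 : EuclideanSpace ℝ (Fin d)) 1) :=
  (volume : Measure (EuclideanSpace ℝ (Fin d))).toSphere

/-- The geodesic distance `d(x,y) = arccos (x ⬝ y)` on the unit sphere. -/
noncomputable def geodesicDist {d : ℕ} (x y : sphere (0 : EuclideanSpace ℝ (Fin d)) 1) : ℝ :=
  Real.arccos (inner (𝕜 := ℝ) (x : EuclideanSpace ℝ (Fin d)) (y : EuclideanSpace ℝ (Fin d)))

/-!
Since `∫ ψ = 0`, the coefficient equals `∫ ψ (f - f x)`. Boundedness of `f` extends the local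
Hölder bound to `|f y - f x| ≲ d(x,y)^t` on the whole sphere, and Peetre's inequality
`1 + 2^i d(y,x) ≤ (1 + 2^i d(y,η)) (1 + 2^i d(x,η)) ≤ K (1 + 2^i d(y,η))` recentres the
localisation of `ψ` at `x`. What remains is `∫ d(y,x)^t (1 + 2^i d(y,x))^{-(d+2)} dy`. On the
shell `k ≤ 2^i d(y,x) < k + 1` the integrand is at most `((k+1) 2^{-i})^t (k+1)^{-(d+2)}`, and
the shell lies in a cap of radius `(k+1) 2^{-i}`, of measure `≲ ((k+1) 2^{-i})^{d-1}`; summing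
gives `≲ 2^{-i(t+d-1)} ∑ (k+1)^{-2}`. The cap estimate holds because the cone over a cap of
radius `r` is covered by `⌈1/r⌉ + 1` balls of radius `2r` centred on the segment `[0, x]`.
Since `|x - y| ≤ d(x,y) ≤ π/2 |x - y|`, all estimates are run with the chordal metric.
-/

open Set Real
open scoped Pointwise

lemma sum_range_inv_add_one_sq_le (N : ℕ) :
    ∑ k ∈ Finset.range N, (((k : ℝ) + 1) ^ 2)⁻¹ ≤ 2 := by
  have h := sum_Ioo_inv_sq_le (α := ℝ) 0 (N + 1)
  rw [← Finset.Ico_add_one_left_eq_Ioo, Finset.sum_Ico_eq_sum_range] at h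
  simpa [add_comm] using h

lemma ceil_inv_add_one_mul_two_mul_pow_le {ρ : ℝ} (hρ : 0 < ρ) (hρ2 : ρ ≤ 2) {d : ℕ}
    (hd : 1 ≤ d) :
    ((⌈ρ⁻¹⌉₊ + 1 : ℕ) : ℝ) * (2 * ρ) ^ d ≤ 5 * 2 ^ d * ρ ^ (d - 1) := by
  have hN : ((⌈ρ⁻¹⌉₊ + 1 : ℕ) : ℝ) * ρ ≤ 5 := by
    have := Nat.ceil_lt_add_one (inv_pos.mpr hρ).le
    push_cast
    nlinarith [inv_mul_cancel₀ hρ.ne']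
  calc ((⌈ρ⁻¹⌉₊ + 1 : ℕ) : ℝ) * (2 * ρ) ^ d
      = 2 ^ d * (((⌈ρ⁻¹⌉₊ + 1 : ℕ) : ℝ) * ρ) * ρ ^ (d - 1) := by
        rw [mul_pow, ← Nat.sub_add_cancel hd, pow_succ ρ, Nat.add_sub_cancel]; ring
    _ ≤ 2 ^ d * 5 * ρ ^ (d - 1) := by gcongr
    _ = 5 * 2 ^ d * ρ ^ (d - 1) := by ring

lemma two_rpow_mul_inv_two_pow_rpow_mul_inv_two_pow (i n : ℕ) (t : ℝ) :
    (2 : ℝ) ^ ((i : ℝ) * n / 2) * (((2 : ℝ) ^ i)⁻¹ ^ t * ((2 : ℝ) ^ i)⁻¹ ^ n) =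
      (2 : ℝ) ^ (-(i : ℝ) * (2 * t + n) / 2) := by
  rw [← Real.rpow_natCast 2 i, ← Real.rpow_neg zero_le_two, ← Real.rpow_natCast _ n,
    ← Real.rpow_mul zero_le_two, ← Real.rpow_mul zero_le_two, ← Real.rpow_add two_pos,
    ← Real.rpow_add two_pos]
  ring_nf

lemma abs_sub_le_mul_rpow_of_local_of_bounded {X : Type*} {f : X → ℝ} {x : X} {ρ : X → ℝ}
    {t M δ Mf : ℝ} (ht : 0 ≤ t) (hδ : 0 < δ) (hfb : ∀ y, |f y| ≤ Mf)
    (hloc : ∀ y, ρ y ≤ δ → |f y - f x| ≤ M * ρ y ^ t) {y : X} (hρ : 0 ≤ ρ y) :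
    |f y - f x| ≤ (|M| + 2 * Mf / δ ^ t) * ρ y ^ t := by
  have hMf : 0 ≤ Mf := (abs_nonneg _).trans (hfb x)
  have hδt : 0 < δ ^ t := Real.rpow_pos_of_pos hδ t
  rcases le_or_gt (ρ y) δ with hnear | hfar
  · calc |f y - f x| ≤ M * ρ y ^ t := hloc y hnear
      _ ≤ |M| * ρ y ^ t := by gcongr; exact le_abs_self M
      _ ≤ (|M| + 2 * Mf / δ ^ t) * ρ y ^ t := by
          gcongr
          exact le_add_of_nonneg_right (by positivity)
  · calc |f y - f x| ≤ |f y| + |f x| := abs_sub _ _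
      _ ≤ 2 * Mf := by linarith [hfb y, hfb x]
      _ = 2 * Mf / δ ^ t * δ ^ t := (div_mul_cancel₀ _ hδt.ne').symm
      _ ≤ 2 * Mf / δ ^ t * ρ y ^ t := by gcongr
      _ ≤ (|M| + 2 * Mf / δ ^ t) * ρ y ^ t := by
          gcongr
          exact le_add_of_nonneg_left (abs_nonneg M)

lemma one_add_mul_dist_le_mul {X : Type*} [PseudoMetricSpace X] {lam : ℝ} (hlam : 0 ≤ lam)
    (x y z : X) :
    1 + lam * dist y x ≤ (1 + lam * dist y z) * (1 + lam * dist x z) := by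
  nlinarith [dist_triangle_right y x z,
    mul_nonneg (mul_nonneg hlam (dist_nonneg (x := y) (y := z)))
      (mul_nonneg hlam (dist_nonneg (x := x) (y := z)))]

lemma abs_integral_mul_le_of_integral_eq_zero {X : Type*} [MeasurableSpace X]
    {μ : Measure X} {ψ f g : X → ℝ} (a : ℝ) (hψ : Integrable ψ μ)
    (hψf : Integrable (fun y => ψ y * f y) μ) (hψ0 : ∫ y, ψ y ∂μ = 0) (hg : Integrable g μ)
    (hle : ∀ y, |ψ y| * |f y - a| ≤ g y) :
    |∫ y, ψ y * f y ∂μ| ≤ ∫ y, g y ∂μ := by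
  have hshift : ∫ y, ψ y * f y ∂μ = ∫ y, ψ y * (f y - a) ∂μ := by
    simp_rw [mul_sub]
    rw [integral_sub hψf (hψ.mul_const a), integral_mul_const, hψ0, zero_mul, sub_zero]
  rw [hshift]
  refine abs_integral_le_integral_abs.trans <| integral_mono_of_nonneg
    (ae_of_all _ fun y => abs_nonneg _) hg (ae_of_all _ fun y => ?_)
  simpa only [abs_mul] using hle y

section CapMeasure

variable {E : Type*} [NormedAddCommGroup E] [NormedSpace ℝ E]

lemma Ioo_smul_closedBall_subset_iUnion {x : E} (hx : ‖x‖ = 1) {r : ℝ} (hr : 0 < r) :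
    Ioo (0 : ℝ) 1 • closedBall x r ⊆
      ⋃ k ∈ Finset.range (⌈r⁻¹⌉₊ + 1), closedBall (((k : ℝ) * r) • x) (2 * r) := by
  rintro _ ⟨a, ⟨ha0, ha1⟩, y, hy, rfl⟩
  have hyx : ‖y - x‖ ≤ r := by rwa [mem_closedBall, dist_eq_norm] at hy
  set k := ⌊a / r⌋₊
  have hkr : (k : ℝ) * r ≤ a := (le_div_iff₀ hr).mp (Nat.floor_le (by positivity))
  have hakr : a < ((k : ℝ) + 1) * r := (div_lt_iff₀ hr).mp (Nat.lt_floor_add_one _)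
  have hk : k < ⌈r⁻¹⌉₊ + 1 := Nat.lt_succ_of_le <|
    (Nat.floor_le_floor (by rw [div_eq_mul_inv]; nlinarith [inv_pos.mpr hr])).trans
      (Nat.floor_le_ceil _)
  refine mem_biUnion (Finset.mem_range.mpr hk) ?_
  rw [mem_closedBall, dist_eq_norm,
    show a • y - ((k : ℝ) * r) • x = a • (y - x) + (a - k * r) • x by
      rw [smul_sub, sub_smul]; abel]
  calc ‖a • (y - x) + (a - k * r) • x‖
      ≤ ‖a • (y - x)‖ + ‖(a - k * r) • x‖ := norm_add_le _ _
    _ = a * ‖y - x‖ + (a - k * r) := by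
      rw [norm_smul, norm_smul, hx, Real.norm_of_nonneg ha0.le,
        Real.norm_of_nonneg (by linarith), mul_one]
    _ ≤ 2 * r := by nlinarith

variable [FiniteDimensional ℝ E] [MeasurableSpace E] [BorelSpace E]

lemma addHaar_Ioo_smul_closedBall_le (μ : Measure E) [μ.IsAddHaarMeasure] {x : E}
    (hx : ‖x‖ = 1) {r : ℝ} (hr : 0 < r) :
    μ (Ioo (0 : ℝ) 1 • closedBall x r) ≤
      (⌈r⁻¹⌉₊ + 1 : ℕ) *
        (ENNReal.ofReal ((2 * r) ^ Module.finrank ℝ E) * μ (ball 0 1)) :=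
  calc μ (Ioo (0 : ℝ) 1 • closedBall x r)
      ≤ μ (⋃ k ∈ Finset.range (⌈r⁻¹⌉₊ + 1),
          closedBall (((k : ℝ) * r) • x) (2 * r)) :=
        measure_mono (Ioo_smul_closedBall_subset_iUnion hx hr)
    _ ≤ ∑ k ∈ Finset.range (⌈r⁻¹⌉₊ + 1),
          μ (closedBall (((k : ℝ) * r) • x) (2 * r)) :=
        measure_biUnion_finset_le _ _
    _ = _ := by
        simp only [Measure.addHaar_closedBall μ _ (by positivity : (0 : ℝ) ≤ 2 * r),
          Finset.sum_const, Finset.card_range, nsmul_eq_mul]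

end CapMeasure

section DyadicShells

variable {X : Type*} [PseudoMetricSpace X] {x : X} {A R t lam : ℝ} {n : ℕ}

lemma dist_rpow_mul_inv_pow_le_sum_indicator (ht : 0 ≤ t) (hlam : 0 < lam) {y : X}
    (hy : dist y x ≤ R) (m : ℕ) :
    dist y x ^ t * ((1 + lam * dist y x)⁻¹) ^ m ≤
      ∑ k ∈ Finset.range (⌈lam * R⌉₊ + 1), (closedBall x ((k + 1) / lam)).indicator
        (fun _ => ((k + 1) / lam) ^ t * (((k : ℝ) + 1)⁻¹) ^ m) y := by
  set k := ⌊lam * dist y x⌋₊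
  have hk : (k : ℝ) ≤ lam * dist y x := Nat.floor_le (by positivity)
  have hk1 : lam * dist y x < k + 1 := Nat.lt_floor_add_one _
  have hdist : dist y x ≤ (k + 1) / lam := (le_div_iff₀' hlam).mpr hk1.le
  have hkN : k ∈ Finset.range (⌈lam * R⌉₊ + 1) := Finset.mem_range.mpr <|
    Nat.lt_succ_of_le ((Nat.floor_le_floor (by gcongr)).trans (Nat.floor_le_ceil _))
  refine le_trans ?_ <|
    Finset.single_le_sum (fun j _ => indicator_nonneg (fun _ _ => by positivity) y) hkN
  rw [indicator_of_mem (mem_closedBall.mpr hdist)]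
  exact mul_le_mul (Real.rpow_le_rpow dist_nonneg hdist ht)
    (pow_le_pow_left₀ (by positivity) (inv_anti₀ (by positivity) (by linarith)) m)
    (by positivity) (by positivity)

variable [MeasurableSpace X] {μ : Measure X}

lemma measureReal_closedBall_mul_rpow_mul_inv_pow_le (hA : 0 ≤ A)
    (hball : ∀ r, 0 < r → μ (closedBall x r) ≤ ENNReal.ofReal (A * r ^ n)) (ht1 : t ≤ 1)
    (hlam : 0 < lam) {u : ℝ} (hu : 1 ≤ u) :
    μ.real (closedBall x (u / lam)) * ((u / lam) ^ t * (u⁻¹) ^ (n + 3)) ≤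
      A * (lam⁻¹ ^ t * lam⁻¹ ^ n) * (u ^ 2)⁻¹ := by
  have hμ : μ.real (closedBall x (u / lam)) ≤ A * (u / lam) ^ n :=
    ENNReal.toReal_le_of_le_ofReal (by positivity) (hball _ (by positivity))
  have hut : u ^ t ≤ u := by simpa using Real.rpow_le_rpow_of_exponent_le hu ht1
  have hpow : u * (u ^ n * u⁻¹ ^ (n + 3)) = (u ^ 2)⁻¹ := by
    rw [inv_pow, pow_add]
    field_simp
  calc μ.real (closedBall x (u / lam)) * ((u / lam) ^ t * u⁻¹ ^ (n + 3))
      ≤ A * (u / lam) ^ n * ((u / lam) ^ t * u⁻¹ ^ (n + 3)) := by gcongr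
    _ = A * (lam⁻¹ ^ t * lam⁻¹ ^ n) * (u ^ t * (u ^ n * u⁻¹ ^ (n + 3))) := by
        rw [div_eq_mul_inv, Real.mul_rpow (by positivity) (by positivity), mul_pow]
        ring
    _ ≤ A * (lam⁻¹ ^ t * lam⁻¹ ^ n) * (u * (u ^ n * u⁻¹ ^ (n + 3))) := by gcongr
    _ = A * (lam⁻¹ ^ t * lam⁻¹ ^ n) * (u ^ 2)⁻¹ := by rw [hpow]

variable [OpensMeasurableSpace X]

lemma integrable_dist_rpow_mul_inv_pow [IsFiniteMeasure μ] (hR : ∀ y, dist y x ≤ R)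
    (ht : 0 ≤ t) (hlam : 0 ≤ lam) (m : ℕ) :
    Integrable (fun y => dist y x ^ t * ((1 + lam * dist y x)⁻¹) ^ m) μ := by
  have hdist : Measurable fun y => dist y x := (continuous_id.dist continuous_const).measurable
  refine (integrable_const (R ^ t)).mono' (by fun_prop) (ae_of_all _ fun y => ?_)
  have hone : 1 ≤ 1 + lam * dist y x := le_add_of_nonneg_right (by positivity)
  rw [Real.norm_of_nonneg (by positivity)]
  calc dist y x ^ t * ((1 + lam * dist y x)⁻¹) ^ m ≤ dist y x ^ t * 1 := by
        gcongr
        exact pow_le_one₀ (by positivity) (inv_le_one_of_one_le₀ hone)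
    _ ≤ R ^ t := by rw [mul_one]; exact Real.rpow_le_rpow dist_nonneg (hR y) ht

lemma integral_dist_rpow_mul_inv_pow_le [IsFiniteMeasure μ] (hA : 0 ≤ A)
    (hball : ∀ r, 0 < r → μ (closedBall x r) ≤ ENNReal.ofReal (A * r ^ n))
    (hR : ∀ y, dist y x ≤ R) (ht : 0 ≤ t) (ht1 : t ≤ 1) (hlam : 0 < lam) :
    ∫ y, dist y x ^ t * ((1 + lam * dist y x)⁻¹) ^ (n + 3) ∂μ ≤
      2 * A * (lam⁻¹ ^ t * lam⁻¹ ^ n) := by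
  set b : ℕ → ℝ := fun k => ((k + 1) / lam) ^ t * (((k : ℝ) + 1)⁻¹) ^ (n + 3)
  have hind (k : ℕ) : Integrable ((closedBall x ((k + 1) / lam)).indicator fun _ => b k) μ :=
    (integrable_const (b k)).indicator measurableSet_closedBall
  calc ∫ y, dist y x ^ t * ((1 + lam * dist y x)⁻¹) ^ (n + 3) ∂μ
      ≤ ∫ y, ∑ k ∈ Finset.range (⌈lam * R⌉₊ + 1),
          (closedBall x ((k + 1) / lam)).indicator (fun _ => b k) y ∂μ :=
        integral_mono (integrable_dist_rpow_mul_inv_pow hR ht hlam.le _)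
          (integrable_finsetSum _ fun k _ => hind k)
          fun y => dist_rpow_mul_inv_pow_le_sum_indicator ht hlam (hR y) _
    _ = ∑ k ∈ Finset.range (⌈lam * R⌉₊ + 1),
          μ.real (closedBall x ((k + 1) / lam)) * b k := by
        rw [integral_finsetSum _ fun k _ => hind k]
        simp only [integral_indicator_const _ measurableSet_closedBall, smul_eq_mul]
    _ ≤ ∑ k ∈ Finset.range (⌈lam * R⌉₊ + 1),
          A * (lam⁻¹ ^ t * lam⁻¹ ^ n) * (((k : ℝ) + 1) ^ 2)⁻¹ :=
        Finset.sum_le_sum fun k _ => measureReal_closedBall_mul_rpow_mul_inv_pow_le hA hball ht1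
          hlam (le_add_of_nonneg_left k.cast_nonneg)
    _ ≤ A * (lam⁻¹ ^ t * lam⁻¹ ^ n) * 2 := by
        rw [← Finset.mul_sum]
        gcongr
        exact sum_range_inv_add_one_sq_le _
    _ = 2 * A * (lam⁻¹ ^ t * lam⁻¹ ^ n) := by ring

lemma abs_integral_mul_le_of_holderAt [IsFiniteMeasure μ] (hA : 0 ≤ A)
    (hball : ∀ r, 0 < r → μ (closedBall x r) ≤ ENNReal.ofReal (A * r ^ n))
    (hR : ∀ y, dist y x ≤ R) (ht : 0 ≤ t) (ht1 : t ≤ 1) (hlam : 0 < lam)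
    {ψ f : X → ℝ} {B L Mf : ℝ} (hψm : Measurable ψ) (hψ0 : ∫ y, ψ y ∂μ = 0)
    (hψ : ∀ y, |ψ y| ≤ B * ((1 + lam * dist y x)⁻¹) ^ (n + 3))
    (hfm : Measurable f) (hfb : ∀ y, |f y| ≤ Mf) (hL : 0 ≤ L)
    (hf : ∀ y, |f y - f x| ≤ L * dist y x ^ t) :
    |∫ y, ψ y * f y ∂μ| ≤ 2 * A * B * L * (lam⁻¹ ^ t * lam⁻¹ ^ n) := by
  have hB : 0 ≤ B := by simpa using (abs_nonneg _).trans (hψ x)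
  have hψbdd (y : X) : ‖ψ y‖ ≤ B := by
    refine (hψ y).trans (mul_le_of_le_one_right hB (pow_le_one₀ (by positivity) ?_))
    exact inv_le_one_of_one_le₀ (le_add_of_nonneg_right (by positivity))
  have hψint : Integrable ψ μ :=
    (integrable_const B).mono' hψm.aestronglyMeasurable (ae_of_all _ hψbdd)
  calc |∫ y, ψ y * f y ∂μ|
      ≤ ∫ y, B * L * (dist y x ^ t * ((1 + lam * dist y x)⁻¹) ^ (n + 3)) ∂μ := by
        refine abs_integral_mul_le_of_integral_eq_zero (f x) hψint
          (hψint.mul_bdd hfm.aestronglyMeasurable (ae_of_all _ hfb)) hψ0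
          ((integrable_dist_rpow_mul_inv_pow hR ht hlam.le _).const_mul _) fun y => ?_
        calc |ψ y| * |f y - f x|
            ≤ B * ((1 + lam * dist y x)⁻¹) ^ (n + 3) * (L * dist y x ^ t) := by
              gcongr
              exacts [hψ y, hf y]
          _ = B * L * (dist y x ^ t * ((1 + lam * dist y x)⁻¹) ^ (n + 3)) := by ring
    _ = B * L * ∫ y, dist y x ^ t * ((1 + lam * dist y x)⁻¹) ^ (n + 3) ∂μ :=
        integral_const_mul _ _
    _ ≤ B * L * (2 * A * (lam⁻¹ ^ t * lam⁻¹ ^ n)) := by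
        gcongr
        exact integral_dist_rpow_mul_inv_pow_le hA hball hR ht ht1 hlam
    _ = 2 * A * B * L * (lam⁻¹ ^ t * lam⁻¹ ^ n) := by ring

end DyadicShells

section Sphere

variable {d : ℕ}

instance : IsFiniteMeasure (sphereMeasure d) := by
  unfold sphereMeasure
  infer_instance

lemma geodesicDist_nonneg (x y : sphere (0 : EuclideanSpace ℝ (Fin d)) 1) :
    0 ≤ geodesicDist x y :=
  arccos_nonneg _

lemma dist_sq_eq_two_sub_two_mul_cos_geodesicDist
    (x y : sphere (0 : EuclideanSpace ℝ (Fin d)) 1) :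
    dist x y ^ 2 = 2 - 2 * cos (geodesicDist x y) := by
  have hx : ‖(x : EuclideanSpace ℝ (Fin d))‖ = 1 := norm_eq_of_mem_sphere x
  have hy : ‖(y : EuclideanSpace ℝ (Fin d))‖ = 1 := norm_eq_of_mem_sphere y
  have hinner := abs_real_inner_le_norm (x : EuclideanSpace ℝ (Fin d)) y
  rw [hx, hy, one_mul, abs_le] at hinner
  rw [geodesicDist, cos_arccos hinner.1 hinner.2, Subtype.dist_eq, dist_eq_norm,
    norm_sub_sq_real, hx, hy]
  ring

lemma dist_le_geodesicDist (x y : sphere (0 : EuclideanSpace ℝ (Fin d)) 1) :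
    dist x y ≤ geodesicDist x y := by
  have hcos : 1 - geodesicDist x y ^ 2 / 2 ≤ cos (geodesicDist x y) :=
    one_sub_sq_div_two_le_cos
  refine (pow_le_pow_iff_left₀ dist_nonneg (geodesicDist_nonneg x y) two_ne_zero).mp ?_
  linarith [dist_sq_eq_two_sub_two_mul_cos_geodesicDist x y]

lemma geodesicDist_le_pi_div_two_mul_dist (x y : sphere (0 : EuclideanSpace ℝ (Fin d)) 1) :
    geodesicDist x y ≤ π / 2 * dist x y := by
  have hθ := geodesicDist_nonneg x y
  have hcos : cos (geodesicDist x y) ≤ 1 - 2 / π ^ 2 * geodesicDist x y ^ 2 :=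
    cos_le_one_sub_mul_cos_sq (by rw [abs_of_nonneg hθ]; exact arccos_le_pi _)
  have hsq : (2 / π * geodesicDist x y) ^ 2 ≤ dist x y ^ 2 := by
    rw [dist_sq_eq_two_sub_two_mul_cos_geodesicDist]
    linarith [show (2 / π * geodesicDist x y) ^ 2 =
      2 * (2 / π ^ 2 * geodesicDist x y ^ 2) by ring]
  have h := (pow_le_pow_iff_left₀ (by positivity) dist_nonneg two_ne_zero).mp hsq
  calc geodesicDist x y = π / 2 * (2 / π * geodesicDist x y) := by field_simp
    _ ≤ π / 2 * dist x y := by gcongr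

lemma dist_le_two_of_mem_sphere (x y : sphere (0 : EuclideanSpace ℝ (Fin d)) 1) :
    dist x y ≤ 2 := by
  have := dist_triangle_right (x : EuclideanSpace ℝ (Fin d)) y 0
  rw [mem_sphere.mp x.2, mem_sphere.mp y.2] at this
  rw [Subtype.dist_eq]
  linarith

lemma exists_sphereMeasure_closedBall_le (hd : 1 ≤ d) :
    ∃ A, 0 ≤ A ∧ ∀ (x : sphere (0 : EuclideanSpace ℝ (Fin d)) 1) (r : ℝ), 0 < r →
      sphereMeasure d (closedBall x r) ≤ ENNReal.ofReal (A * r ^ (d - 1)) := by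
  set V := (volume (ball (0 : EuclideanSpace ℝ (Fin d)) 1)).toReal
  refine ⟨d * (5 * 2 ^ d * V), by positivity, fun x r hr => ?_⟩
  set ρ := min r 2
  have hρ : 0 < ρ := lt_min hr two_pos
  have hball : closedBall x r ⊆ closedBall x ρ := fun y hy =>
    mem_closedBall.mpr (le_min (mem_closedBall.mp hy) (dist_le_two_of_mem_sphere y x))
  have hcone : ((↑) '' closedBall x ρ : Set (EuclideanSpace ℝ (Fin d))) ⊆
      closedBall (x : EuclideanSpace ℝ (Fin d)) ρ :=
    image_subset_iff.mpr fun _ hy => hy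
  have hV : volume (ball (0 : EuclideanSpace ℝ (Fin d)) 1) = ENNReal.ofReal V :=
    (ENNReal.ofReal_toReal measure_ball_lt_top.ne).symm
  calc sphereMeasure d (closedBall x r) ≤ sphereMeasure d (closedBall x ρ) := measure_mono hball
    _ = d * volume
          (Ioo (0 : ℝ) 1 • ((↑) '' closedBall x ρ : Set (EuclideanSpace ℝ (Fin d)))) := by
        rw [sphereMeasure, Measure.toSphere_apply' _ measurableSet_closedBall,
          finrank_euclideanSpace_fin]
    _ ≤ d * ((⌈ρ⁻¹⌉₊ + 1 : ℕ) *
          (ENNReal.ofReal ((2 * ρ) ^ d) * volume (ball (0 : EuclideanSpace ℝ (Fin d)) 1))) := by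
        gcongr
        refine (measure_mono (Set.smul_subset_smul_left hcone)).trans ?_
        simpa only [finrank_euclideanSpace_fin] using
          addHaar_Ioo_smul_closedBall_le volume (norm_eq_of_mem_sphere x) hρ
    _ = ENNReal.ofReal (d * (((⌈ρ⁻¹⌉₊ + 1 : ℕ) : ℝ) * (2 * ρ) ^ d * V)) := by
        rw [hV, ← ENNReal.ofReal_natCast d, ← ENNReal.ofReal_natCast (⌈ρ⁻¹⌉₊ + 1),
          ← ENNReal.ofReal_mul (by positivity), ← ENNReal.ofReal_mul (by positivity),
          ← ENNReal.ofReal_mul (by positivity), mul_assoc (((⌈ρ⁻¹⌉₊ + 1 : ℕ) : ℝ))]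
    _ ≤ ENNReal.ofReal (d * (5 * 2 ^ d * V) * r ^ (d - 1)) := by
        refine ENNReal.ofReal_le_ofReal ?_
        calc (d : ℝ) * (((⌈ρ⁻¹⌉₊ + 1 : ℕ) : ℝ) * (2 * ρ) ^ d * V)
            ≤ d * (5 * 2 ^ d * ρ ^ (d - 1) * V) := by
              gcongr _ * (?_ * _)
              exact ceil_inv_add_one_mul_two_mul_pow_le hρ (min_le_right r 2) hd
          _ ≤ d * (5 * 2 ^ d * r ^ (d - 1) * V) := by gcongr; exact min_le_left r 2
          _ = d * (5 * 2 ^ d * V) * r ^ (d - 1) := by ring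

lemma abs_le_mul_inv_one_add_mul_dist_pow {g : sphere (0 : EuclideanSpace ℝ (Fin d)) 1 → ℝ}
    {a lam K : ℝ} {m : ℕ} (hlam : 0 ≤ lam) {x η y : sphere (0 : EuclideanSpace ℝ (Fin d)) 1}
    (hK : 1 + lam * geodesicDist x η ≤ K)
    (hg : |g y| ≤ a / (1 + lam * geodesicDist y η) ^ m) :
    |g y| ≤ |a| * K ^ m * ((1 + lam * dist y x)⁻¹) ^ m := by
  have hyη := geodesicDist_nonneg y η
  have hK0 : 0 < K := by nlinarith [geodesicDist_nonneg x η]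
  have hchain : 1 + lam * dist y x ≤ (1 + lam * geodesicDist y η) * K := by
    refine (one_add_mul_dist_le_mul hlam x y η).trans (mul_le_mul ?_ ?_ (by positivity) ?_)
    · gcongr
      exact dist_le_geodesicDist y η
    · exact le_trans (by gcongr; exact dist_le_geodesicDist x η) hK
    · positivity
  calc |g y| ≤ |a| * ((1 + lam * geodesicDist y η) ^ m)⁻¹ := by
        rw [← div_eq_mul_inv]
        exact hg.trans (by gcongr; exact le_abs_self a)
    _ = |a| * K ^ m * (((1 + lam * geodesicDist y η) * K)⁻¹) ^ m := by
        rw [mul_inv, mul_pow, inv_pow, inv_pow]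
        field_simp
    _ ≤ |a| * K ^ m * ((1 + lam * dist y x)⁻¹) ^ m := by gcongr

lemma abs_sub_le_mul_dist_rpow_of_holderAt {f : sphere (0 : EuclideanSpace ℝ (Fin d)) 1 → ℝ}
    {x : sphere (0 : EuclideanSpace ℝ (Fin d)) 1}
    {t M δ Mf : ℝ} (ht : 0 ≤ t) (hδ : 0 < δ) (hfb : ∀ y, |f y| ≤ Mf)
    (hHolder : ∀ y, geodesicDist x y ≤ δ → |f y - f x| ≤ M * geodesicDist x y ^ t)
    (y : sphere (0 : EuclideanSpace ℝ (Fin d)) 1) :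
    |f y - f x| ≤ (|M| + 2 * Mf / δ ^ t) * (π / 2) ^ t * dist y x ^ t := by
  have hMf : 0 ≤ Mf := (abs_nonneg _).trans (hfb x)
  calc |f y - f x| ≤ (|M| + 2 * Mf / δ ^ t) * geodesicDist x y ^ t :=
        abs_sub_le_mul_rpow_of_local_of_bounded ht hδ hfb hHolder (geodesicDist_nonneg x y)
    _ ≤ (|M| + 2 * Mf / δ ^ t) * (π / 2 * dist y x) ^ t := by
        rw [dist_comm]
        gcongr
        exacts [geodesicDist_nonneg x y, geodesicDist_le_pi_div_two_mul_dist x y]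
    _ = (|M| + 2 * Mf / δ ^ t) * (π / 2) ^ t * dist y x ^ t := by
        rw [Real.mul_rpow (by positivity) dist_nonneg, mul_assoc]

end Sphere

/-- Local decay of needlet coefficients near a Hölder point: if `f` is locally `t`-Hölder
at `x` (`0 < t ≤ 1`), bounded, and `ψ` is a localized function centered at `η` with
`∫ψ = 0`, `|ψ(y)| ≤ c_m 2^{i(d-1)/2}/(1+2^i d(y,η))^m` for every `m`, and
`1 + 2^i d(x,η) ≤ K`, then `|∫ ψ f| ≤ C 2^{-i(2t+d-1)/2}`. -/
theorem local_coefficient_decay (d : ℕ) (hd : 2 ≤ d) (t M δ Mf K : ℝ)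
    (ht : 0 < t) (ht1 : t ≤ 1) (hδ : 0 < δ)
    (x : sphere (0 : EuclideanSpace ℝ (Fin d)) 1)
    (f : sphere (0 : EuclideanSpace ℝ (Fin d)) 1 → ℝ)
    (hfm : Measurable f) (hfb : ∀ y, |f y| ≤ Mf)
    (hHolder : ∀ y, geodesicDist x y ≤ δ → |f y - f x| ≤ M * geodesicDist x y ^ t)
    (c : ℕ → ℝ) :
    ∃ C, ∀ (i : ℕ) (η : sphere (0 : EuclideanSpace ℝ (Fin d)) 1)
      (ψ : sphere (0 : EuclideanSpace ℝ (Fin d)) 1 → ℝ),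
      Measurable ψ →
      (∫ y, ψ y ∂(sphereMeasure d)) = 0 →
      (∀ (m : ℕ) (y : sphere (0 : EuclideanSpace ℝ (Fin d)) 1),
        |ψ y| ≤ c m * (2 : ℝ) ^ ((i : ℝ) * (d - 1) / 2) / (1 + 2 ^ i * geodesicDist y η) ^ m) →
      1 + 2 ^ i * geodesicDist x η ≤ K →
      |∫ y, ψ y * f y ∂(sphereMeasure d)|
        ≤ C * (2 : ℝ) ^ (-(i : ℝ) * (2 * t + d - 1) / 2) := by
  obtain ⟨A, hA, hcap⟩ := exists_sphereMeasure_closedBall_le (d := d) (by omega)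
  have hMf : 0 ≤ Mf := (abs_nonneg _).trans (hfb x)
  set L := (|M| + 2 * Mf / δ ^ t) * (π / 2) ^ t
  refine ⟨|c (d + 2)| * K ^ (d + 2) * L * (2 * A), fun i η ψ hψm hψ0 hψ hK => ?_⟩
  set P : ℝ := 2 ^ ((i : ℝ) * (d - 1) / 2)
  have hψx (y) : |ψ y| ≤ |c (d + 2) * P| * K ^ (d + 2) *
      ((1 + 2 ^ i * dist y x)⁻¹) ^ (d - 1 + 3) := by
    rw [show d - 1 + 3 = d + 2 by omega]
    exact abs_le_mul_inv_one_add_mul_dist_pow (by positivity) hK (hψ _ y)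
  have hpow := two_rpow_mul_inv_two_pow_rpow_mul_inv_two_pow i (d - 1) t
  rw [Nat.cast_sub (by omega), Nat.cast_one, ← add_sub_assoc] at hpow
  calc |∫ y, ψ y * f y ∂(sphereMeasure d)|
      ≤ 2 * A * (|c (d + 2) * P| * K ^ (d + 2)) * L *
          (((2 : ℝ) ^ i)⁻¹ ^ t * ((2 : ℝ) ^ i)⁻¹ ^ (d - 1)) :=
        abs_integral_mul_le_of_holderAt hA (hcap x) (dist_le_two_of_mem_sphere · x) ht.le ht1
          (by positivity) hψm hψ0 hψx hfm hfb (by positivity)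
          (abs_sub_le_mul_dist_rpow_of_holderAt ht.le hδ hfb hHolder)
    _ = |c (d + 2)| * K ^ (d + 2) * L * (2 * A) *
          (2 : ℝ) ^ (-(i : ℝ) * (2 * t + d - 1) / 2) := by
        rw [← hpow, abs_mul, abs_of_pos (by positivity : 0 < P)]
        ring
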